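/- \widetilde{UI}((X,X'):Y\setminus Z) \ge \widetilde{UI}(X:Y\setminus Z): enlarging the target variable does not decrease unique information. -/

import Mathlib

open scoped BigOperators Classical

noncomputable section

/-- Shannon entropy (in bits) of a distribution on a finite type. -/
def ent {A : Type*} [Fintype A] (q : A → ℝ) : ℝ :=
  -∑ a, q a * Real.logb 2 (q a)

def ent2 {A B : Type*} [Fintype A] [Fintype B] (q : A → B → ℝ) : ℝ :=
  ent (fun p : A × B => q p.1 p.2)

def ent3 {A B C : Type*} [Fintype A] [Fintype B] [Fintype C] (q : A → B → C → ℝ) : ℝ :=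
  ent (fun p : A × B × C => q p.1 p.2.1 p.2.2)

/-- Mutual information MI(A:B) (in bits) of a joint distribution `q`. -/
def MI {A B : Type*} [Fintype A] [Fintype B] (q : A → B → ℝ) : ℝ :=
  ent (fun a => ∑ b, q a b) + ent (fun b => ∑ a, q a b) - ent2 q

/-- Conditional mutual information MI(A:B|C) of a joint distribution `q` of (A,B,C):
`MI(A:B|C) = H(A,C) + H(B,C) - H(C) - H(A,B,C)`. -/
def CMI {A B C : Type*} [Fintype A] [Fintype B] [Fintype C] (q : A → B → C → ℝ) : ℝ :=
  ent2 (fun a c => ∑ b, q a b c) + ent2 (fun b c => ∑ a, q a b c)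
    - ent (fun c => ∑ a, ∑ b, q a b c) - ent3 q

/-- Coinformation CoI(A;B;C) = MI(A:B) - MI(A:B|C). -/
def CoI {A B C : Type*} [Fintype A] [Fintype B] [Fintype C] (q : A → B → C → ℝ) : ℝ :=
  MI (fun a b => ∑ c, q a b c) - CMI q

structure IsDist2 {A B : Type*} [Fintype A] [Fintype B] (q : A → B → ℝ) : Prop where
  nonneg : ∀ a b, 0 ≤ q a b
  sum_one : ∑ a, ∑ b, q a b = 1

structure IsDist3 {A B C : Type*} [Fintype A] [Fintype B] [Fintype C]
    (q : A → B → C → ℝ) : Prop where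
  nonneg : ∀ a b c, 0 ≤ q a b c
  sum_one : ∑ a, ∑ b, ∑ c, q a b c = 1

structure IsDist4 {A B C D : Type*} [Fintype A] [Fintype B] [Fintype C] [Fintype D]
    (q : A → B → C → D → ℝ) : Prop where
  nonneg : ∀ a b c d, 0 ≤ q a b c d
  sum_one : ∑ a, ∑ b, ∑ c, ∑ d, q a b c d = 1

structure IsDist5 {A B C D E : Type*} [Fintype A] [Fintype B] [Fintype C] [Fintype D] [Fintype E]
    (q : A → B → C → D → E → ℝ) : Prop where
  nonneg : ∀ a b c d e, 0 ≤ q a b c d e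
  sum_one : ∑ a, ∑ b, ∑ c, ∑ d, ∑ e, q a b c d e = 1

/-- Δ_P: the joint distributions of (X,Y,Z) having the same (X,Y)- and (X,Z)-marginals as P. -/
def Delta {A B C : Type*} [Fintype A] [Fintype B] [Fintype C] (p : A → B → C → ℝ) :
    Set (A → B → C → ℝ) :=
  {q | IsDist3 q ∧ (∀ a b, ∑ c, q a b c = ∑ c, p a b c)
      ∧ (∀ a c, ∑ b, q a b c = ∑ b, p a b c)}

/-- MI(X:(Y,Z)). -/
def MIpair {A B C : Type*} [Fintype A] [Fintype B] [Fintype C] (q : A → B → C → ℝ) : ℝ :=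
  MI (fun a (p : B × C) => q a p.1 p.2)

/-- The unique information UI~(X : Y \ Z) = min over Δ_P of MI_Q(X:Y|Z). -/
def UI {A B C : Type*} [Fintype A] [Fintype B] [Fintype C] (p : A → B → C → ℝ) : ℝ :=
  sInf (CMI '' Delta p)

/-- The unique information UI~(X : Z \ Y) = min over Δ_P of MI_Q(X:Z|Y). -/
def UIr {A B C : Type*} [Fintype A] [Fintype B] [Fintype C] (p : A → B → C → ℝ) : ℝ :=
  sInf ((fun q => CMI (fun a c b => q a b c)) '' Delta p)

/-- The shared information SI~(X : Y ; Z) = max over Δ_P of CoI_Q(X;Y;Z). -/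
def SI {A B C : Type*} [Fintype A] [Fintype B] [Fintype C] (p : A → B → C → ℝ) : ℝ :=
  sSup (CoI '' Delta p)

/-- The complementary information CI~(X : Y ; Z) = MI_P(X:(Y,Z)) - min over Δ_P of MI_Q(X:(Y,Z)). -/
def CI {A B C : Type*} [Fintype A] [Fintype B] [Fintype C] (p : A → B → C → ℝ) : ℝ :=
  MIpair p - sInf (MIpair '' Delta p)

/-! ### Auxiliary lemmas -/

lemma ent_comp_equiv {A B : Type*} [Fintype A] [Fintype B] (e : A ≃ B) (f : B → ℝ) :
    ent (fun a => f (e a)) = ent f := by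
  unfold ent
  rw [Equiv.sum_comp e (fun b => f b * Real.logb 2 (f b))]

lemma ent_eq {A : Type*} [Fintype A] (f : A → ℝ) :
    ent f = -(∑ a, f a * Real.log (f a)) / Real.log 2 := by
  unfold ent
  rw [neg_div, Finset.sum_div]
  congr 1
  refine Finset.sum_congr rfl fun a _ => ?_
  rw [Real.logb]
  ring

lemma key_ineq (r B C A : ℝ) (hr : 0 ≤ r) (hB0 : 0 ≤ B) (hC0 : 0 ≤ C)
    (hrB : r ≤ B) (hrC : r ≤ C) (hBA : B ≤ A) :
    r - (if A = 0 then 0 else B * C / A)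
      ≤ r * (Real.log r + Real.log A - Real.log B - Real.log C) := by
  rcases eq_or_lt_of_le hr with h0 | hrpos
  · rw [← h0]
    simp only [zero_sub, zero_mul, neg_nonpos]
    split
    · exact le_refl 0
    · next h =>
      have hA : 0 < A := lt_of_le_of_ne (le_trans hB0 hBA) (Ne.symm h)
      positivity
  · have hB : 0 < B := lt_of_lt_of_le hrpos hrB
    have hC : 0 < C := lt_of_lt_of_le hrpos hrC
    have hA : 0 < A := lt_of_lt_of_le hB hBA
    rw [if_neg hA.ne']
    have hx : (0:ℝ) < B * C / (r * A) := by positivity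
    have hlog := Real.log_le_sub_one_of_pos hx
    have hrw : Real.log (B * C / (r * A))
        = Real.log B + Real.log C - (Real.log r + Real.log A) := by
      rw [Real.log_div (by positivity) (by positivity), Real.log_mul hB.ne' hC.ne',
        Real.log_mul hrpos.ne' hA.ne']
    rw [hrw] at hlog
    have h2 := mul_le_mul_of_nonneg_left hlog hr
    have hr0 : r ≠ 0 := hrpos.ne'
    have hA0 : A ≠ 0 := hA.ne'
    have h3 : r * (B * C / (r * A) - 1) = B * C / A - r := by
      field_simp
    rw [h3] at h2
    have h4 : r * (Real.log r + Real.log A - Real.log B - Real.log C)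
        = -(r * (Real.log B + Real.log C - (Real.log r + Real.log A))) := by ring
    linarith

lemma ent_submodular {U V W : Type*} [Fintype U] [Fintype V] [Fintype W]
    (r : U → V → W → ℝ) (hr : ∀ u v w, 0 ≤ r u v w) :
    ent (fun u => ∑ v, ∑ w, r u v w) + ent3 r
      ≤ ent2 (fun u v => ∑ w, r u v w) + ent2 (fun u w => ∑ v, r u v w) := by
  have hL : (0:ℝ) < Real.log 2 := Real.log_pos one_lt_two
  have hB0 : ∀ u v, 0 ≤ ∑ w, r u v w := fun u v => Finset.sum_nonneg fun w _ => hr u v w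
  have hC0 : ∀ u w, 0 ≤ ∑ v, r u v w := fun u w => Finset.sum_nonneg fun v _ => hr u v w
  -- pointwise inequality
  have hpoint : ∀ u v w, r u v w -
      (if (∑ v', ∑ w', r u v' w') = 0 then 0
        else (∑ w', r u v w') * (∑ v', r u v' w) / (∑ v', ∑ w', r u v' w'))
      ≤ r u v w * (Real.log (r u v w) + Real.log (∑ v', ∑ w', r u v' w')
          - Real.log (∑ w', r u v w') - Real.log (∑ v', r u v' w)) := by
    intro u v w
    refine key_ineq _ _ _ _ (hr u v w) (hB0 u v) (hC0 u w) ?_ ?_ ?_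
    · exact Finset.single_le_sum (fun w' _ => hr u v w') (Finset.mem_univ w)
    · exact Finset.single_le_sum (fun v' _ => hr u v' w) (Finset.mem_univ v)
    · exact Finset.single_le_sum (f := fun v' => ∑ w', r u v' w')
        (fun v' _ => hB0 u v') (Finset.mem_univ v)
  -- the subtracted terms sum to the total
  have hsumS : ∀ u, (∑ v, ∑ w,
      (if (∑ v', ∑ w', r u v' w') = (0:ℝ) then (0:ℝ)
        else (∑ w', r u v w') * (∑ v', r u v' w) / (∑ v', ∑ w', r u v' w')))
      = ∑ v, ∑ w, r u v w := by
    intro u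
    by_cases h : (∑ v', ∑ w', r u v' w') = 0
    · simp only [if_pos h]
      simpa using h.symm
    · simp only [if_neg h]
      have step : ∀ v, ∑ w, ((∑ w', r u v w') * (∑ v', r u v' w) / (∑ v', ∑ w', r u v' w'))
          = (∑ w', r u v w') * (∑ w, ∑ v', r u v' w) / (∑ v', ∑ w', r u v' w') := by
        intro v
        rw [← Finset.sum_div, ← Finset.mul_sum]
      simp only [step]
      rw [← Finset.sum_div, ← Finset.sum_mul]
      have hAS : (∑ w, ∑ v', r u v' w) = ∑ v, ∑ w, r u v w := Finset.sum_comm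
      rw [hAS, mul_div_assoc, div_self h, mul_one]
  have hzero : ∑ u, ∑ v, ∑ w, (r u v w -
      (if (∑ v', ∑ w', r u v' w') = 0 then 0
        else (∑ w', r u v w') * (∑ v', r u v' w) / (∑ v', ∑ w', r u v' w'))) = 0 := by
    refine Finset.sum_eq_zero fun u _ => ?_
    simp only [Finset.sum_sub_distrib]
    rw [hsumS u, sub_self]
  have h1 : (0:ℝ) ≤ ∑ u, ∑ v, ∑ w,
      r u v w * (Real.log (r u v w) + Real.log (∑ v', ∑ w', r u v' w')
          - Real.log (∑ w', r u v w') - Real.log (∑ v', r u v' w)) := by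
    calc (0:ℝ) = ∑ u, ∑ v, ∑ w, (r u v w -
        (if (∑ v', ∑ w', r u v' w') = 0 then 0
          else (∑ w', r u v w') * (∑ v', r u v' w) / (∑ v', ∑ w', r u v' w'))) := hzero.symm
      _ ≤ _ := Finset.sum_le_sum fun u _ => Finset.sum_le_sum fun v _ =>
          Finset.sum_le_sum fun w _ => hpoint u v w
  -- expand the sum
  have hexp : ∀ u : U,
      (∑ v, ∑ w, r u v w * (Real.log (r u v w) + Real.log (∑ v', ∑ w', r u v' w')
          - Real.log (∑ w', r u v w') - Real.log (∑ v', r u v' w)))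
      = (∑ v, ∑ w, r u v w * Real.log (r u v w))
        + (∑ v, ∑ w, r u v w) * Real.log (∑ v', ∑ w', r u v' w')
        - (∑ v, (∑ w, r u v w) * Real.log (∑ w', r u v w'))
        - (∑ w, (∑ v, r u v w) * Real.log (∑ v', r u v' w)) := by
    intro u
    have b1 : (∑ v, ∑ w, r u v w * Real.log (∑ v', ∑ w', r u v' w'))
        = (∑ v, ∑ w, r u v w) * Real.log (∑ v', ∑ w', r u v' w') := by
      simp only [← Finset.sum_mul]
    have c1 : (∑ v, ∑ w, r u v w * Real.log (∑ w', r u v w'))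
        = ∑ v, (∑ w, r u v w) * Real.log (∑ w', r u v w') := by
      refine Finset.sum_congr rfl fun v _ => ?_
      rw [← Finset.sum_mul]
    have d1 : (∑ v, ∑ w, r u v w * Real.log (∑ v', r u v' w))
        = ∑ w, (∑ v, r u v w) * Real.log (∑ v', r u v' w) := by
      rw [Finset.sum_comm]
      refine Finset.sum_congr rfl fun w _ => ?_
      rw [← Finset.sum_mul]
    calc (∑ v, ∑ w, r u v w * (Real.log (r u v w) + Real.log (∑ v', ∑ w', r u v' w')
          - Real.log (∑ w', r u v w') - Real.log (∑ v', r u v' w)))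
        = ∑ v, ∑ w, (r u v w * Real.log (r u v w)
            + r u v w * Real.log (∑ v', ∑ w', r u v' w')
            - r u v w * Real.log (∑ w', r u v w')
            - r u v w * Real.log (∑ v', r u v' w)) := by
          refine Finset.sum_congr rfl fun v _ => Finset.sum_congr rfl fun w _ => ?_
          ring
      _ = (∑ v, ∑ w, r u v w * Real.log (r u v w))
            + (∑ v, ∑ w, r u v w * Real.log (∑ v', ∑ w', r u v' w'))
            - (∑ v, ∑ w, r u v w * Real.log (∑ w', r u v w'))
            - (∑ v, ∑ w, r u v w * Real.log (∑ v', r u v' w)) := by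
          simp only [Finset.sum_sub_distrib, Finset.sum_add_distrib]
      _ = _ := by rw [b1, c1, d1]
  simp only [hexp] at h1
  simp only [Finset.sum_sub_distrib, Finset.sum_add_distrib] at h1
  -- convert entropies
  have eA : ent (fun u => ∑ v, ∑ w, r u v w)
      = -(∑ u, (∑ v, ∑ w, r u v w) * Real.log (∑ v, ∑ w, r u v w)) / Real.log 2 := ent_eq _
  have e3 : ent3 r
      = -(∑ u, ∑ v, ∑ w, r u v w * Real.log (r u v w)) / Real.log 2 := by
    rw [show ent3 r = ent (fun p : U × V × W => r p.1 p.2.1 p.2.2) from rfl, ent_eq]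
    simp [Fintype.sum_prod_type]
  have e2B : ent2 (fun u v => ∑ w, r u v w)
      = -(∑ u, ∑ v, (∑ w, r u v w) * Real.log (∑ w, r u v w)) / Real.log 2 := by
    rw [show ent2 (fun u v => ∑ w, r u v w)
        = ent (fun p : U × V => ∑ w, r p.1 p.2 w) from rfl, ent_eq]
    simp [Fintype.sum_prod_type]
  have e2C : ent2 (fun u w => ∑ v, r u v w)
      = -(∑ u, ∑ w, (∑ v, r u v w) * Real.log (∑ v, r u v w)) / Real.log 2 := by
    rw [show ent2 (fun u w => ∑ v, r u v w)
        = ent (fun p : U × W => ∑ v, r p.1 v p.2) from rfl, ent_eq]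
    simp [Fintype.sum_prod_type]
  rw [eA, e3, e2B, e2C, ← add_div, ← add_div,
    div_le_div_iff_of_pos_right hL]
  linarith

lemma CMI_nonneg {A B C : Type*} [Fintype A] [Fintype B] [Fintype C]
    (q : A → B → C → ℝ) (hq : ∀ a b c, 0 ≤ q a b c) : 0 ≤ CMI q := by
  have h := ent_submodular (fun c a b => q a b c) (fun c a b => hq a b c)
  have f1 : ent3 (fun c a b => q a b c) = ent3 q :=
    ent_comp_equiv (⟨fun p => (p.2.1, p.2.2, p.1), fun p => (p.2.2, p.1, p.2.1),
      fun p => rfl, fun p => rfl⟩ : C × A × B ≃ A × B × C)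
      (fun p : A × B × C => q p.1 p.2.1 p.2.2)
  have f2 : ent2 (fun c a => ∑ b, q a b c) = ent2 (fun a c => ∑ b, q a b c) :=
    ent_comp_equiv (Equiv.prodComm C A) (fun p : A × C => ∑ b, q p.1 b p.2)
  have f3 : ent2 (fun c b => ∑ a, q a b c) = ent2 (fun b c => ∑ a, q a b c) :=
    ent_comp_equiv (Equiv.prodComm C B) (fun p : B × C => ∑ a, q a p.1 p.2)
  rw [f1, f2, f3] at h
  unfold CMI
  linarith

lemma CMI_marginal_le {A V B C : Type*} [Fintype A] [Fintype V] [Fintype B] [Fintype C]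
    (q : A × V → B → C → ℝ) (hq : ∀ a b c, 0 ≤ q a b c) :
    CMI (fun a b c => ∑ v, q (a, v) b c) ≤ CMI q := by
  have h := ent_submodular (fun (u : A × C) (v : V) (w : B) => q (u.1, v) w u.2)
      (fun u v w => hq _ _ _)
  have e1 : ent (fun u : A × C => ∑ v, ∑ w, q (u.1, v) w u.2)
      = ent2 (fun a c => ∑ b, ∑ v, q (a, v) b c) := by
    rw [show ent2 (fun a c => ∑ b, ∑ v, q (a, v) b c)
        = ent (fun u : A × C => ∑ b, ∑ v, q (u.1, v) b u.2) from rfl]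
    exact congrArg ent (funext fun u => Finset.sum_comm)
  have e2 : ent3 (fun (u : A × C) (v : V) (w : B) => q (u.1, v) w u.2) = ent3 q :=
    ent_comp_equiv (⟨fun p => ((p.1.1, p.2.1), p.2.2, p.1.2),
      fun p => ((p.1.1, p.2.2), p.1.2, p.2.1), fun p => rfl, fun p => rfl⟩ :
        (A × C) × V × B ≃ (A × V) × B × C)
      (fun p : (A × V) × B × C => q p.1 p.2.1 p.2.2)
  have e3 : ent2 (fun (u : A × C) (v : V) => ∑ w, q (u.1, v) w u.2)
      = ent2 (fun (p : A × V) (c : C) => ∑ b, q p b c) :=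
    ent_comp_equiv (⟨fun p => ((p.1.1, p.2), p.1.2),
      fun p => ((p.1.1, p.2), p.1.2), fun p => rfl, fun p => rfl⟩ :
        (A × C) × V ≃ (A × V) × C)
      (fun p : (A × V) × C => ∑ b, q p.1 b p.2)
  have e4 : ent2 (fun (u : A × C) (w : B) => ∑ v, q (u.1, v) w u.2)
      = ent3 (fun a b c => ∑ v, q (a, v) b c) :=
    ent_comp_equiv (⟨fun p => (p.1.1, p.2, p.1.2),
      fun p => ((p.1, p.2.2), p.2.1), fun p => rfl, fun p => rfl⟩ :
        (A × C) × B ≃ A × B × C)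
      (fun p : A × B × C => ∑ v, q (p.1, v) p.2.1 p.2.2)
  rw [e1, e2, e3, e4] at h
  have m1 : ent2 (fun (b : B) (c : C) => ∑ a : A, ∑ v, q (a, v) b c)
      = ent2 (fun (b : B) (c : C) => ∑ p : A × V, q p b c) := by
    refine congrArg ent2 (funext fun b => funext fun c => ?_)
    exact (Fintype.sum_prod_type (fun p : A × V => q p b c)).symm
  have m2 : ent (fun c : C => ∑ a : A, ∑ b : B, ∑ v, q (a, v) b c)
      = ent (fun c : C => ∑ p : A × V, ∑ b : B, q p b c) := by
    refine congrArg ent (funext fun c => ?_)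
    rw [Fintype.sum_prod_type]
    exact Finset.sum_congr rfl fun a _ => Finset.sum_comm
  unfold CMI
  simp only []
  linarith [h, m1, m2]

/-- `UI~((X,X'):Y\Z) ≥ UI~(X:Y\Z)`: enlarging the target variable
does not decrease unique information. -/
theorem UI_monotone_target {X X' Y Z : Type*} [Fintype X] [Fintype X'] [Fintype Y] [Fintype Z]
    (p' : X → X' → Y → Z → ℝ) (hp : IsDist4 p') :
    UI (fun (a : X × X') y z => p' a.1 a.2 y z)
      ≥ UI (fun x y z => ∑ x', p' x x' y z) := by
  rw [ge_iff_le]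
  unfold UI
  have hbdd : BddBelow (CMI '' Delta (fun x y z => ∑ x', p' x x' y z)) := by
    refine ⟨0, ?_⟩
    rintro t ⟨q, hq, rfl⟩
    exact CMI_nonneg q hq.1.nonneg
  have hne : (CMI '' Delta (fun (a : X × X') y z => p' a.1 a.2 y z)).Nonempty := by
    refine ⟨_, ⟨fun (a : X × X') y z => p' a.1 a.2 y z, ?_, rfl⟩⟩
    refine ⟨⟨fun a y z => hp.nonneg a.1 a.2 y z, ?_⟩, fun a b => rfl, fun a c => rfl⟩
    rw [Fintype.sum_prod_type]
    exact hp.sum_one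
  refine le_csInf hne ?_
  rintro t ⟨q, hq, rfl⟩
  obtain ⟨⟨hqnn, hqsum⟩, hq1, hq2⟩ := hq
  refine csInf_le_of_le hbdd ⟨fun x y z => ∑ x', q (x, x') y z, ?_, rfl⟩
    (CMI_marginal_le q hqnn)
  refine ⟨⟨fun x y z => Finset.sum_nonneg fun x' _ => hqnn (x, x') y z, ?_⟩, ?_, ?_⟩
  · have hswap : ∀ x : X, (∑ y, ∑ z, ∑ x', q (x, x') y z)
        = ∑ x', ∑ y, ∑ z, q (x, x') y z := by
      intro x
      rw [show (∑ y, ∑ z, ∑ x', q (x, x') y z) = ∑ y, ∑ x', ∑ z, q (x, x') y z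
        from Finset.sum_congr rfl fun y _ => Finset.sum_comm, Finset.sum_comm]
    simp only [hswap]
    exact (Fintype.sum_prod_type (fun a : X × X' => ∑ y, ∑ z, q a y z)).symm.trans hqsum
  · intro x y
    calc (∑ z, ∑ x', q (x, x') y z) = ∑ x', ∑ z, q (x, x') y z := Finset.sum_comm
      _ = ∑ x', ∑ z, p' x x' y z := Finset.sum_congr rfl fun x' _ => hq1 (x, x') y
      _ = ∑ z, ∑ x', p' x x' y z := Finset.sum_comm
  · intro x z
    calc (∑ y, ∑ x', q (x, x') y z) = ∑ x', ∑ y, q (x, x') y z := Finset.sum_comm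
      _ = ∑ x', ∑ y, p' x x' y z := Finset.sum_congr rfl fun x' _ => hq2 (x, x') z
      _ = ∑ y, ∑ x', p' x x' y z := Finset.sum_comm

end
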